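/- arXiv:2507.05704 — 3 statements merged into one kernel-verified Lean document; each statement's English description precedes it below -/
import Mathlib

section
/- Let Q : ℕ → ℝ be a sequence of nonnegative reals, and let x, y, z ≥ 0 with x + y < 1. Suppose there is a delay bound τ ≥ 0 such that for every t ≥ 1 there exists l_t with t - 1 - τ ≤ l_t ≤ t - 1 and Q(t) ≤ x·Q(t-1) + y·Q(l_t) + z. Then for all t ≥ 0, Q(t) ≤ ρ^t · Q(0) + δ, where ρ = (x+y)^(1/(1+τ)) and δ = z/(1 - x - y). -/
theorem stmt_0 (Q : ℕ → ℝ) (hQ : ∀ t, 0 ≤ Q t)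
    (x y z : ℝ) (hx : 0 ≤ x) (hy : 0 ≤ y) (hz : 0 ≤ z) (hxy : x + y < 1)
    (τ : ℕ)
    (hrec : ∀ t : ℕ, 1 ≤ t → ∃ l : ℕ, t - 1 - τ ≤ l ∧ l ≤ t - 1 ∧
      Q t ≤ x * Q (t - 1) + y * Q l + z) :
    ∀ t : ℕ, Q t ≤ ((x + y) ^ ((1 : ℝ) / (1 + τ))) ^ t * Q 0 + z / (1 - x - y) := by
  have ha : (0:ℝ) ≤ x + y := by linarith
  set ρ : ℝ := (x + y) ^ ((1 : ℝ) / (1 + τ)) with hρdef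
  have hτpos : (0:ℝ) < 1 + (τ:ℝ) := by positivity
  have hρ0 : 0 ≤ ρ := Real.rpow_nonneg ha _
  have hρ1 : ρ ≤ 1 := Real.rpow_le_one ha hxy.le (by positivity)
  have hρpow : ρ ^ (1 + τ) = x + y := by
    rw [hρdef, ← Real.rpow_natCast (_ ^ _) (1 + τ), ← Real.rpow_mul ha]
    rw [show ((1:ℝ)/(1+τ)) * ((1+τ : ℕ):ℝ) = 1 by
      push_cast; field_simp]
    exact Real.rpow_one _
  have hden : (0:ℝ) < 1 - x - y := by linarith
  set δ : ℝ := z / (1 - x - y) with hδdef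
  have hδ0 : 0 ≤ δ := div_nonneg hz hden.le
  have hδeq : x * δ + y * δ + z = δ := by
    rw [hδdef]; field_simp; ring
  intro t
  induction t using Nat.strong_induction_on with
  | _ t IH =>
    match t with
    | 0 => simp; nlinarith [hQ 0]
    | (n+1) =>
      set t := n + 1 with ht
      obtain ⟨l, hl1, hl2, hQt⟩ := hrec t (by omega)
      have IH1 : Q (t-1) ≤ ρ ^ (t-1) * Q 0 + δ := IH (t-1) (by omega)
      have IH2 : Q l ≤ ρ ^ l * Q 0 + δ := IH l (by omega)
      have key : x * ρ ^ (t-1) + y * ρ ^ l ≤ ρ ^ t := by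
        have h1 : ρ ^ (t-1) ≤ ρ ^ (t-1-τ) :=
          pow_le_pow_of_le_one hρ0 hρ1 (by omega)
        have h2 : ρ ^ l ≤ ρ ^ (t-1-τ) :=
          pow_le_pow_of_le_one hρ0 hρ1 hl1
        have h3 : x * ρ ^ (t-1) + y * ρ ^ l ≤ (x + y) * ρ ^ (t-1-τ) := by
          nlinarith
        have h4 : (x + y) * ρ ^ (t-1-τ) = ρ ^ ((1+τ) + (t-1-τ)) := by
          rw [pow_add, hρpow]
        have h5 : ρ ^ ((1+τ) + (t-1-τ)) ≤ ρ ^ t :=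
          pow_le_pow_of_le_one hρ0 hρ1 (by omega)
        linarith
      have hQ0 := hQ 0
      calc Q t ≤ x * Q (t-1) + y * Q l + z := hQt
        _ ≤ x * (ρ ^ (t-1) * Q 0 + δ) + y * (ρ ^ l * Q 0 + δ) + z := by
            nlinarith
        _ = (x * ρ ^ (t-1) + y * ρ ^ l) * Q 0 + (x * δ + y * δ + z) := by ring
        _ ≤ ρ ^ t * Q 0 + δ := by
            rw [hδeq]
            nlinarith
end

section
/- Let F : ℝ^d → ℝ be differentiable, L-smooth, μ-strongly convex with minimizer w*, and let 1/(2L) < γ < 1/L. Let w_l ∈ ℝ^d, let F_j be differentiable with ‖∇F(w) - ∇F_j(w)‖² ≤ Λ²G² for all w, and let w̃ = w_l - γ·∇F_j(w_l) + ε for some ε ∈ ℝ^d. Then F(w̃) - F(w*) ≤ (1 - 2μγ + μ/L)·(F(w_l) - F(w*)) + γ·Λ²·G² + L·‖ε‖². -/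
set_option maxHeartbeats 1000000

open RealInnerProductSpace

theorem stmt_12 {d : ℕ} (F Fj : EuclideanSpace ℝ (Fin d) → ℝ)
    (hdiff : Differentiable ℝ F) (hdiffj : Differentiable ℝ Fj)
    (μ L γ : ℝ) (hμ : 0 ≤ μ) (hL : 0 < L)
    (hγ1 : 1 / (2 * L) < γ) (hγ2 : γ < 1 / L)
    (hsmooth : ∀ u v : EuclideanSpace ℝ (Fin d),
      F v ≤ F u + ⟪gradient F u, v - u⟫ + L / 2 * ‖v - u‖ ^ 2)
    (hsc : ∀ u v : EuclideanSpace ℝ (Fin d),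
      F v - F u ≥ ⟪gradient F u, v - u⟫ + μ / 2 * ‖v - u‖ ^ 2)
    (wstar : EuclideanSpace ℝ (Fin d)) (hmin : ∀ w, F wstar ≤ F w)
    (Λ G : ℝ)
    (hdiv : ∀ w, ‖gradient F w - gradient Fj w‖ ^ 2 ≤ Λ ^ 2 * G ^ 2)
    (wl ε wt : EuclideanSpace ℝ (Fin d))
    (hwt : wt = wl - γ • gradient Fj wl + ε) :
    F wt - F wstar ≤ (1 - 2 * μ * γ + μ / L) * (F wl - F wstar) +
      γ * Λ ^ 2 * G ^ 2 + L * ‖ε‖ ^ 2 := by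
  obtain ⟨g, hg⟩ : ∃ g, gradient F wl = g := ⟨_, rfl⟩
  obtain ⟨gj, hgj⟩ : ∃ gj, gradient Fj wl = gj := ⟨_, rfl⟩
  have hγpos : 0 < γ := lt_trans (by positivity) hγ1
  have hx : L * γ < 1 := by
    rw [mul_comm]; exact (lt_div_iff₀ hL).mp hγ2
  have hA : (0:ℝ) ≤ ‖g‖ ^ 2 := by positivity
  have hB : (0:ℝ) ≤ ‖gj‖ ^ 2 := by positivity
  -- inner product expansions
  have hvt : wt - wl = ε - γ • gj := by rw [hwt, hgj]; abel
  have hinner : ⟪g, wt - wl⟫ = ⟪g, ε⟫ - γ * ⟪g, gj⟫ := by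
    rw [hvt, inner_sub_right, real_inner_smul_right]
  have hnorm : ‖wt - wl‖ ^ 2 = ‖ε‖^2 - 2 * γ * ⟪gj, ε⟫ + γ^2 * ‖gj‖^2 := by
    rw [hvt, norm_sub_sq_real, real_inner_smul_right, norm_smul,
      real_inner_comm ε gj]
    simp [mul_pow, sq_abs]
    ring
  have hdel : ‖g - gj‖ ^ 2 = ‖g‖^2 - 2 * ⟪g, gj⟫ + ‖gj‖^2 := norm_sub_sq_real g gj
  -- Young inequality hint
  have hyoung : (0:ℝ) ≤ ‖g‖^2 - 2*(L*γ)*⟪g,gj⟫ + (L*γ)^2*‖gj‖^2 - 2*L*⟪g,ε⟫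
      + 2*L*(L*γ)*⟪gj,ε⟫ + L^2*‖ε‖^2 := by
    have h0 : (0:ℝ) ≤ ‖(g - (L*γ) • gj) - L • ε‖ ^ 2 := by positivity
    have hexp : ‖(g - (L*γ) • gj) - L • ε‖ ^ 2
        = ‖g‖^2 - 2*(L*γ)*⟪g,gj⟫ + (L*γ)^2*‖gj‖^2 - 2*L*⟪g,ε⟫
          + 2*L*(L*γ)*⟪gj,ε⟫ + L^2*‖ε‖^2 := by
      rw [norm_sub_sq_real, norm_sub_sq_real, real_inner_smul_right,
        inner_sub_left, real_inner_smul_right, real_inner_smul_left,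
        norm_smul, norm_smul]
      simp only [real_inner_smul_right, mul_pow, sq_abs, Real.norm_eq_abs]
      ring
    linarith [hexp ▸ h0]
  have hdiv' : ‖g‖^2 - 2*⟪g,gj⟫ + ‖gj‖^2 ≤ Λ^2 * G^2 := by
    have := hdiv wl
    rw [hg, hgj, hdel] at this
    exact this
  -- key descent bound
  have hkey : F wt ≤ F wl + (-γ + 1/(2*L)) * ‖g‖^2 + γ * (Λ^2 * G^2) + L * ‖ε‖^2 := by
    have h1 := hsmooth wl wt
    rw [hg, hinner, hnorm] at h1
    have h3 : (⟪g, ε⟫ - γ * ⟪g, gj⟫) + L/2 * (‖ε‖^2 - 2*γ*⟪gj,ε⟫ + γ^2*‖gj‖^2)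
        ≤ (-γ + 1/(2*L)) * ‖g‖^2 + γ * (‖g‖^2 - 2*⟪g,gj⟫ + ‖gj‖^2) + L * ‖ε‖^2 := by
      rw [← sub_nonneg]
      have key : ((-γ + 1/(2*L)) * ‖g‖^2 + γ * (‖g‖^2 - 2*⟪g,gj⟫ + ‖gj‖^2) + L * ‖ε‖^2)
          - ((⟪g, ε⟫ - γ * ⟪g, gj⟫) + L/2 * (‖ε‖^2 - 2*γ*⟪gj,ε⟫ + γ^2*‖gj‖^2))
          = ((‖g‖^2 - 2*(L*γ)*⟪g,gj⟫ + (L*γ)^2*‖gj‖^2 - 2*L*⟪g,ε⟫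
              + 2*L*(L*γ)*⟪gj,ε⟫ + L^2*‖ε‖^2)
            + 2*L*γ*(1 - L*γ)*‖gj‖^2) / (2*L) := by
        field_simp
        ring
      rw [key]
      apply div_nonneg _ (by linarith)
      have hb2 : (0:ℝ) ≤ 2*L*γ*(1 - L*γ)*‖gj‖^2 := by
        apply mul_nonneg _ hB
        apply mul_nonneg (by positivity) (by linarith)
      linarith
    have h4 : γ * (‖g‖^2 - 2*⟪g,gj⟫ + ‖gj‖^2) ≤ γ * (Λ^2 * G^2) :=
      mul_le_mul_of_nonneg_left hdiv' hγpos.le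
    linarith
  -- PL-type inequality from strong convexity
  have hgap : 0 ≤ F wl - F wstar := by linarith [hmin wl]
  have hpl : 2 * μ * (F wl - F wstar) ≤ ‖g‖^2 := by
    have hsc' := hsc wl wstar
    rw [hg] at hsc'
    have hy : (0:ℝ) ≤ ‖g - μ • (wl - wstar)‖ ^ 2 := by positivity
    have hexp : ‖g - μ • (wl - wstar)‖ ^ 2
        = ‖g‖^2 - 2*μ*⟪g, wl - wstar⟫ + μ^2*‖wl - wstar‖^2 := by
      rw [norm_sub_sq_real, real_inner_smul_right, norm_smul]
      simp only [mul_pow, sq_abs, Real.norm_eq_abs]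
      ring
    rw [hexp] at hy
    have hws : ⟪g, wstar - wl⟫ = -⟪g, wl - wstar⟫ := by
      rw [← inner_neg_right]; congr 1; abel
    have hnn : ‖wstar - wl‖ ^ 2 = ‖wl - wstar‖ ^ 2 := by rw [norm_sub_rev]
    rw [hws, hnn] at hsc'
    nlinarith [sq_nonneg ‖wl - wstar‖, mul_nonneg hμ (sq_nonneg ‖wl - wstar‖)]
  -- combine
  have hcoef : -γ + 1/(2*L) ≤ 0 := by linarith
  have hfin : (-γ + 1/(2*L)) * ‖g‖^2
      ≤ (-γ + 1/(2*L)) * (2 * μ * (F wl - F wstar)) :=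
    mul_le_mul_of_nonpos_left hpl hcoef
  have hLe : (-γ + 1/(2*L)) * (2 * μ * (F wl - F wstar))
      = (-(2*μ*γ) + μ/L) * (F wl - F wstar) := by
    field_simp
  rw [hLe] at hfin
  nlinarith [hkey, hfin]
end

section
/- Let x, y ≥ 0 with x + y < 1, z ≥ 0, τ a nonnegative integer, ρ = (x+y)^(1/(1+τ)), δ = z/(1-x-y). Then for all integers t ≥ 1 and any l with max(0, t-1-τ) ≤ l ≤ t-1: x·ρ^(t-1) + y·ρ^l ≤ ρ^t, and x·δ + y·δ + z = δ. Consequently, if Q(t-1) ≤ ρ^(t-1)Q(0) + δ and Q(l) ≤ ρ^l Q(0) + δ with Q(0) ≥ 0, then x·Q(t-1) + y·Q(l) + z ≤ ρ^t Q(0) + δ. -/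
theorem stmt_16 (x y z : ℝ) (hx : 0 ≤ x) (hy : 0 ≤ y) (hz : 0 ≤ z) (hxy : x + y < 1)
    (τ : ℕ) (ρ δ : ℝ) (hρ : ρ = (x + y) ^ ((1 : ℝ) / (1 + τ))) (hδ : δ = z / (1 - x - y))
    (t l : ℕ) (ht : 1 ≤ t) (hl1 : t - 1 - τ ≤ l) (hl2 : l ≤ t - 1) :
    x * ρ ^ (t - 1) + y * ρ ^ l ≤ ρ ^ t ∧
    x * δ + y * δ + z = δ ∧
    (∀ Qt1 Ql Q0 : ℝ, 0 ≤ Q0 → Qt1 ≤ ρ ^ (t - 1) * Q0 + δ → Ql ≤ ρ ^ l * Q0 + δ →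
      x * Qt1 + y * Ql + z ≤ ρ ^ t * Q0 + δ) := by
  have hxy0 : 0 ≤ x + y := by linarith
  have hτ : (0:ℝ) < 1 + τ := by positivity
  have hρ0 : 0 ≤ ρ := by rw [hρ]; exact Real.rpow_nonneg hxy0 _
  have hρ1 : ρ ≤ 1 := by
    rw [hρ]
    exact Real.rpow_le_one hxy0 hxy.le (by positivity)
  have hpow : ρ ^ (τ + 1) = x + y := by
    rw [hρ, ← Real.rpow_natCast ((x + y) ^ ((1:ℝ)/(1+τ))) (τ+1),
      ← Real.rpow_mul hxy0]
    have : (1:ℝ)/(1+τ) * ((τ:ℝ)+1) = 1 := by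
      field_simp; ring
    push_cast
    rw [this, Real.rpow_one]
  have key : x * ρ ^ (t - 1) + y * ρ ^ l ≤ ρ ^ t := by
    have h1 : ρ ^ (t - 1) ≤ ρ ^ (t - 1 - τ) :=
      pow_le_pow_of_le_one hρ0 hρ1 (Nat.sub_le _ _)
    have h2 : ρ ^ l ≤ ρ ^ (t - 1 - τ) :=
      pow_le_pow_of_le_one hρ0 hρ1 hl1
    have h3 : x * ρ ^ (t - 1) + y * ρ ^ l ≤ (x + y) * ρ ^ (t - 1 - τ) := by
      have := mul_le_mul_of_nonneg_left h1 hx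
      have := mul_le_mul_of_nonneg_left h2 hy
      nlinarith
    have h4 : (x + y) * ρ ^ (t - 1 - τ) = ρ ^ (τ + 1 + (t - 1 - τ)) := by
      rw [pow_add, hpow]
    have h5 : t ≤ τ + 1 + (t - 1 - τ) := by omega
    have h6 : ρ ^ (τ + 1 + (t - 1 - τ)) ≤ ρ ^ t :=
      pow_le_pow_of_le_one hρ0 hρ1 h5
    linarith
  have hne : 1 - x - y ≠ 0 := by linarith
  have keyδ : x * δ + y * δ + z = δ := by
    rw [hδ]; field_simp; ring
  refine ⟨key, keyδ, fun Qt1 Ql Q0 hQ0 h1 h2 => ?_⟩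
  have := mul_le_mul_of_nonneg_left h1 hx
  have := mul_le_mul_of_nonneg_left h2 hy
  nlinarith [mul_le_mul_of_nonneg_right key hQ0]
end
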